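/- arXiv:2103.05816 — 2 statements merged into one kernel-verified Lean document; each statement's English description precedes it below -/
import Mathlib

section
/- If G is a graph with χ(G) ≥ 3, and G has a proper coloring using χ(G) colors in which at least one color class has size at least 4, then B(G) ≥ 4. -/
open Finset

variable {V : Type*}

/-- A proper coloring given as a function to ℕ. -/
def IsProperColoring (G : SimpleGraph V) (c : V → ℕ) : Prop :=
  ∀ ⦃u v⦄, G.Adj u v → c u ≠ c v

variable [Fintype V] [DecidableEq V]

/-- Two colorings use every color the same number of times. -/
def SameColorCounts (c c' : V → ℕ) : Prop :=
  ∀ k : ℕ, (univ.filter fun v => c v = k).card = (univ.filter fun v => c' v = k).card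

/-- The number of vertices on which two colorings differ. -/
def recolorCount (c c' : V → ℕ) : ℕ := (univ.filter fun v => c v ≠ c' v).card

/-- The ℕ-valued chromatic number. -/
noncomputable def chromNum (G : SimpleGraph V) : ℕ := G.chromaticNumber.toNat

/-- A proper coloring of `G` using exactly `χ(G)` colors. -/
noncomputable def IsOptimalColoring (G : SimpleGraph V) (f : V → ℕ) : Prop :=
  IsProperColoring G f ∧ (univ.image f).card = chromNum G

/-- The villainy of a coloring `c`: the least number of vertices that must be
recolored to obtain a proper coloring using each color as often as `c` does. -/
noncomputable def colVillainy (G : SimpleGraph V) (c : V → ℕ) : ℕ :=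
  sInf {n | ∃ c', IsProperColoring G c' ∧ SameColorCounts c c' ∧ recolorCount c c' = n}

/-- `c` is a permutation of the coloring `f`. -/
def IsPermutationOf (c f : V → ℕ) : Prop := ∃ σ : Equiv.Perm V, c = f ∘ σ

/-- The villainy of `G`: the maximum villainy over all permutations of optimal
proper colorings of `G`. -/
noncomputable def villainy (G : SimpleGraph V) : ℕ :=
  sSup {n | ∃ f c, IsOptimalColoring G f ∧ IsPermutationOf c f ∧ colVillainy G c = n}

/-!
If some vertex met every edge, `G` would be 2-colorable; so since `χ(G) ≥ 3`, `G` contains two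
disjoint edges or a triangle, i.e. a set `W` of at most four vertices whose edges no single
vertex covers. Permute the optimal coloring so that `W` lies inside a color class of size at
least four. A proper recoloring with the same color counts must move at least two vertices of
`W` out of that color, and hence as many other vertices into it: at least four vertices change.
-/

lemma SimpleGraph.colorable_two_of_forall_adj_eq {U : Type*} (G : SimpleGraph U) (s : U)
    (hs : ∀ u v, G.Adj u v → u = s ∨ v = s) : G.Colorable 2 := by
  classical
  refine ⟨SimpleGraph.Coloring.mk (fun v => if v = s then (0 : Fin 2) else 1) ?_⟩
  intro u v huv
  rcases hs u v huv with rfl | rfl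
  · simp [huv.ne.symm]
  · simp [huv.ne]

lemma exists_adj_ne_ne_of_three_le_chromNum {U : Type*} {G : SimpleGraph U}
    (hchi : 3 ≤ chromNum G) (s : U) : ∃ u v, G.Adj u v ∧ u ≠ s ∧ v ≠ s := by
  by_contra! hs
  have hle : chromNum G ≤ 2 := ENat.toNat_le_of_le_natCast
    (G.colorable_two_of_forall_adj_eq s fun u v huv =>
      or_iff_not_imp_left.mpr (hs u v huv)).chromaticNumber_le
  omega

lemma exists_disjoint_adj_or_exists_adj {U : Type*} {G : SimpleGraph U}
    (h : ∀ s, ∃ u v, G.Adj u v ∧ u ≠ s ∧ v ≠ s) (a b : U) :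
    (∃ x y, G.Adj x y ∧ a ≠ x ∧ a ≠ y ∧ b ≠ x ∧ b ≠ y) ∨ ∃ z, G.Adj b z ∧ z ≠ a := by
  obtain ⟨x, y, hxy, hxa, hya⟩ := h a
  by_cases hbx : b = x
  · exact .inr ⟨y, hbx ▸ hxy, hya⟩
  by_cases hby : b = y
  · exact .inr ⟨x, hby ▸ hxy.symm, hxa⟩
  exact .inl ⟨x, y, hxy, hxa.symm, hya.symm, hbx, hby⟩

def CoversEdgesOn {U : Type*} (G : SimpleGraph U) (W S : Finset U) : Prop :=
  ∀ u ∈ W, ∀ v ∈ W, G.Adj u v → u ∈ S ∨ v ∈ S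

section CoversEdgesOn

variable {U : Type*} [DecidableEq U] {G : SimpleGraph U} {S : Finset U}

lemma CoversEdgesOn.two_le_card_of_disjoint_adj {a b x y : U}
    (hS : CoversEdgesOn G {a, b, x, y} S) (hab : G.Adj a b) (hxy : G.Adj x y)
    (hax : a ≠ x) (hay : a ≠ y) (hbx : b ≠ x) (hby : b ≠ y) : 2 ≤ #S := by
  refine one_lt_card.mpr ?_
  rcases hS a (by simp) b (by simp) hab with ha | hb <;>
    rcases hS x (by simp) y (by simp) hxy with hx | hy
  exacts [⟨a, ha, x, hx, hax⟩, ⟨a, ha, y, hy, hay⟩, ⟨b, hb, x, hx, hbx⟩, ⟨b, hb, y, hy, hby⟩]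

lemma CoversEdgesOn.two_le_card_of_triangle {a b c : U} (hS : CoversEdgesOn G {a, b, c} S)
    (hab : G.Adj a b) (hbc : G.Adj b c) (hac : G.Adj a c) : 2 ≤ #S := by
  refine one_lt_card.mpr ?_
  rcases hS a (by simp) b (by simp) hab with ha | hb
  · rcases hS b (by simp) c (by simp) hbc with hb | hc
    exacts [⟨a, ha, b, hb, hab.ne⟩, ⟨a, ha, c, hc, hac.ne⟩]
  · rcases hS a (by simp) c (by simp) hac with ha | hc
    exacts [⟨a, ha, b, hb, hab.ne⟩, ⟨b, hb, c, hc, hbc.ne⟩]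

/-- A graph in which no vertex meets every edge contains two disjoint edges or a triangle. -/
lemma exists_card_le_four_forall_coversEdgesOn_two_le_card [Nonempty U]
    (h : ∀ s, ∃ u v, G.Adj u v ∧ u ≠ s ∧ v ≠ s) :
    ∃ W : Finset U, #W ≤ 4 ∧ ∀ S, CoversEdgesOn G W S → 2 ≤ #S := by
  obtain ⟨a, b, hab, -, -⟩ := h (Classical.arbitrary U)
  have disjoint_edges : ∀ {a b x y : U}, G.Adj a b → G.Adj x y → a ≠ x → a ≠ y → b ≠ x →
      b ≠ y → ∃ W : Finset U, #W ≤ 4 ∧ ∀ S, CoversEdgesOn G W S → 2 ≤ #S :=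
    fun hab hxy hax hay hbx hby => ⟨_, card_le_four, fun _ hS =>
      hS.two_le_card_of_disjoint_adj hab hxy hax hay hbx hby⟩
  rcases exists_disjoint_adj_or_exists_adj h a b with
    ⟨x, y, hxy, hax, hay, hbx, hby⟩ | ⟨z, hbz, hza⟩
  · exact disjoint_edges hab hxy hax hay hbx hby
  rcases exists_disjoint_adj_or_exists_adj h b a with
    ⟨x, y, hxy, hbx, hby, hax, hay⟩ | ⟨w, haw, hwb⟩
  · exact disjoint_edges hab hxy hax hay hbx hby
  by_cases hzw : z = w
  · subst hzw
    exact ⟨_, card_le_three.trans (by norm_num), fun _ hS =>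
      hS.two_le_card_of_triangle hab hbz haw⟩
  · exact disjoint_edges hbz haw hab.ne.symm hwb.symm hza hzw

end CoversEdgesOn

section Recoloring

variable {U : Type*} [Fintype U]

lemma exists_perm_forall_apply_eq {f : U → ℕ} {k : ℕ} {W : Finset U}
    (hW : #W ≤ #{v | f v = k}) : ∃ σ : Equiv.Perm U, ∀ v ∈ W, f (σ v) = k := by
  classical
  obtain ⟨T, hT, hTW⟩ := exists_subset_card_eq hW
  let e : {v // v ∈ W} ≃ {v // v ∈ T} := equivOfCardEq hTW.symm
  refine ⟨e.extendSubtype, fun v hv => ?_⟩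
  simpa using (mem_filter.mp (hT (e.extendSubtype_mem v hv))).2

lemma sameColorCounts_comp (f : U → ℕ) (σ : Equiv.Perm U) :
    SameColorCounts (f ∘ σ) f :=
  fun _ => card_equiv σ (by simp)

/-- Vertices leaving color `k` must be matched by as many vertices entering it. -/
lemma two_mul_card_filter_le_recolorCount {c c' : U → ℕ} (hcc' : SameColorCounts c c')
    (k : ℕ) : 2 * #{v | c v = k ∧ c' v ≠ k} ≤ recolorCount c c' := by
  classical
  have hleave : #{v | c v = k} = #{v | c v = k ∧ c' v = k} + #{v | c v = k ∧ c' v ≠ k} := by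
    rw [← card_filter_add_card_filter_not (fun v => c' v = k), filter_filter, filter_filter]
  have henter : #{v | c' v = k} = #{v | c v = k ∧ c' v = k} + #{v | c v ≠ k ∧ c' v = k} := by
    rw [← card_filter_add_card_filter_not (fun v => c v = k), filter_filter, filter_filter]
    simp only [and_comm]
  have hdisj : Disjoint (univ.filter fun v => c v = k ∧ c' v ≠ k)
      (univ.filter fun v => c v ≠ k ∧ c' v = k) :=
    disjoint_filter.mpr fun _ _ h h' => h'.1 h.1
  have hsub : (univ.filter fun v => c v = k ∧ c' v ≠ k) ∪
      (univ.filter fun v => c v ≠ k ∧ c' v = k) ⊆ univ.filter fun v => c v ≠ c' v := by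
    intro v
    simp only [mem_union, mem_filter, mem_univ, true_and]
    omega
  have hunion := card_le_card hsub
  rw [card_union_of_disjoint hdisj] at hunion
  have := hcc' k
  unfold recolorCount
  omega

/-- The vertices of `W` that a proper recoloring moves out of color `k` cover the edges of `W`. -/
lemma two_mul_le_recolorCount {G : SimpleGraph U} {W : Finset U} {m : ℕ}
    (hW : ∀ S, CoversEdgesOn G W S → m ≤ #S) {c c' : U → ℕ} {k : ℕ} (hc : ∀ v ∈ W, c v = k)
    (hc' : IsProperColoring G c') (hcc' : SameColorCounts c c') :
    2 * m ≤ recolorCount c c' := by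
  have hcover : CoversEdgesOn G W {v ∈ W | c' v ≠ k} := by
    intro u hu v hv huv
    by_contra! h
    simp only [mem_filter, hu, hv, true_and, not_not] at h
    exact hc' huv (h.1.trans h.2.symm)
  calc 2 * m ≤ 2 * #{v ∈ W | c' v ≠ k} := by gcongr; exact hW _ hcover
    _ ≤ 2 * #{v | c v = k ∧ c' v ≠ k} := by
      gcongr
      intro v
      simp only [mem_filter, mem_univ, true_and]
      exact fun ⟨hv, h⟩ => ⟨hc v hv, h⟩
    _ ≤ recolorCount c c' := two_mul_card_filter_le_recolorCount hcc' k

lemma le_colVillainy {G : SimpleGraph U} {c c₀ : U → ℕ} (h₀ : IsProperColoring G c₀)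
    (hc₀ : SameColorCounts c c₀) {n : ℕ}
    (h : ∀ c', IsProperColoring G c' → SameColorCounts c c' → n ≤ recolorCount c c') :
    n ≤ colVillainy G c :=
  le_csInf ⟨_, c₀, h₀, hc₀, rfl⟩ fun _ ⟨c', hc', hcc', hn⟩ => hn ▸ h c' hc' hcc'

lemma colVillainy_le_recolorCount {G : SimpleGraph U} {c c' : U → ℕ}
    (hc' : IsProperColoring G c') (hcc' : SameColorCounts c c') :
    colVillainy G c ≤ recolorCount c c' := by
  unfold colVillainy
  exact Nat.sInf_le ⟨c', hc', hcc', rfl⟩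

lemma colVillainy_le_villainy {G : SimpleGraph U} {f : U → ℕ} (hf : IsOptimalColoring G f)
    (σ : Equiv.Perm U) : colVillainy G (f ∘ σ) ≤ villainy G := by
  unfold villainy
  refine le_csSup ⟨Fintype.card U, ?_⟩ ⟨f, _, hf, ⟨σ, rfl⟩, rfl⟩
  rintro _ ⟨g, _, hg, ⟨τ, rfl⟩, rfl⟩
  exact (colVillainy_le_recolorCount hg.1 (sameColorCounts_comp g τ)).trans (card_le_univ _)

end Recoloring

theorem villainy_ge_four_of_class_four (G : SimpleGraph V)
    (hchi : 3 ≤ chromNum G)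
    (f : V → ℕ) (hf : IsOptimalColoring G f)
    (k : ℕ) (hk : 4 ≤ (univ.filter fun v => f v = k).card) :
    4 ≤ villainy G := by
  have : Nonempty V := ⟨(card_pos.mp (by omega : 0 < #{v | f v = k})).choose⟩
  obtain ⟨W, hW4, hW⟩ := exists_card_le_four_forall_coversEdgesOn_two_le_card
    (exists_adj_ne_ne_of_three_le_chromNum hchi)
  obtain ⟨σ, hσ⟩ := exists_perm_forall_apply_eq (hW4.trans hk)
  calc 4 ≤ colVillainy G (f ∘ σ) := le_colVillainy hf.1 (sameColorCounts_comp f σ)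
        fun _ hc' hcc' => two_mul_le_recolorCount hW hσ hc' hcc'
    _ ≤ villainy G := colVillainy_le_villainy hf σ
end

section
/- The villainy of the disjoint union K_3 + K_2 (a triangle together with a disjoint edge) is 2. -/
open Finset

variable {V : Type*}

variable [Fintype V] [DecidableEq V]

/-!
An optimal coloring of `K₃ + K₂` uses three colors on the triangle and two of them on the edge,
so every color occurs at most twice, also in any permutation `c` of it. If `c` is
injective on the triangle it is already proper: the triangle then shows all three colors, and a
monochromatic edge would give its color a third occurrence. Otherwise a color missing from the
triangle sits on the edge, and swapping it with one of the two equally colored triangle vertices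
makes the triangle injective. Hence two recolorings always suffice. They are needed for the
permutation that puts both vertices of one color into the triangle: it is not proper, changing
no vertex leaves it improper, and changing exactly one vertex alters the color counts.
-/

section Coloring

variable {α β W : Type*}

theorem isProperColoring_top_iff {c : α → ℕ} :
    IsProperColoring (⊤ : SimpleGraph α) c ↔ Function.Injective c :=
  ⟨fun hc _ _ hab => by_contra fun hne => hc hne hab, fun hc _ _ hne hab => hne (hc hab)⟩

theorem isProperColoring_sum_iff {G : SimpleGraph α} {H : SimpleGraph β} {c : α ⊕ β → ℕ} :
    IsProperColoring (G ⊕g H) c ↔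
      IsProperColoring G (c ∘ Sum.inl) ∧ IsProperColoring H (c ∘ Sum.inr) := by
  refine ⟨fun hc => ⟨fun _ _ h => hc (by simpa using h), fun _ _ h => hc (by simpa using h)⟩, ?_⟩
  rintro ⟨hG, hH⟩ (u | u) (v | v) h
  · exact hG (by simpa using h)
  · simp at h
  · simp at h
  · exact hH (by simpa using h)

variable [Fintype W]

theorem card_filter_comp_perm_eq (c : W → ℕ) (σ : Equiv.Perm W) (k : ℕ) :
    (univ.filter fun v => c (σ v) = k).card = (univ.filter fun v => c v = k).card := by
  simpa only [card_filter] using Equiv.sum_comp σ fun v => if c v = k then 1 else 0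

theorem card_filter_le_one_of_injective {c : W → ℕ} (hc : Function.Injective c) (k : ℕ) :
    (univ.filter fun v => c v = k).card ≤ 1 :=
  card_le_one.mpr fun _ hx _ hy => hc ((mem_filter.mp hx).2.trans (mem_filter.mp hy).2.symm)

theorem ne_of_card_filter_le_two {c : W → ℕ} (hfib : ∀ k, (univ.filter fun v => c v = k).card ≤ 2)
    {x y w : W} (hxy : x ≠ y) (hxw : x ≠ w) (hyw : y ≠ w) (h : c x = c y) : c x ≠ c w := fun h' =>
  (hfib (c x)).not_gt (two_lt_card.mpr ⟨x, by simp, y, by simp [h], w, by simp [h'], hxy, hxw, hyw⟩)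

theorem image_comp_perm [DecidableEq W] (c : W → ℕ) (σ : Equiv.Perm W) :
    univ.image (c ∘ σ) = univ.image c := by
  rw [← image_image, image_univ_equiv]

theorem SameColorCounts.symm {c c' : W → ℕ} (h : SameColorCounts c c') : SameColorCounts c' c :=
  fun k => (h k).symm

theorem sameColorCounts_comp_perm (c : W → ℕ) (σ : Equiv.Perm W) : SameColorCounts (c ∘ σ) c :=
  card_filter_comp_perm_eq c σ

theorem recolorCount_comp_swap_le [DecidableEq W] (c : W → ℕ) (u v : W) :
    recolorCount c (c ∘ Equiv.swap u v) ≤ 2 := by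
  refine (card_le_card fun w hw => ?_).trans (card_le_two (a := u) (b := v))
  simp only [mem_filter, mem_univ, true_and, Function.comp_apply] at hw
  simp only [mem_insert, mem_singleton]
  by_contra! h
  exact hw (by rw [Equiv.swap_apply_of_ne_of_ne h.1 h.2])

theorem eq_of_recolorCount_eq_zero {c c' : W → ℕ} (h : recolorCount c c' = 0) : c = c' := by
  have hagree : ∀ v, c v = c' v := by simpa [recolorCount, filter_eq_empty_iff] using h
  exact funext hagree

theorem not_sameColorCounts_of_recolorCount_eq_one {c c' : W → ℕ} (h : recolorCount c c' = 1) :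
    ¬ SameColorCounts c c' := by
  obtain ⟨v, hv⟩ := card_eq_one.mp h
  have hdiff : ∀ w, c w ≠ c' w ↔ w = v := fun w => by
    simpa using congrArg (w ∈ ·) hv
  intro hs
  -- recoloring `v` removes it from the class of its old color and adds nothing to that class
  refine (hs (c v)).not_gt (card_lt_card <| (ssubset_iff_of_subset fun w hw => ?_).mpr
    ⟨v, by simp, by simpa using ((hdiff v).mpr rfl).symm⟩)
  simp only [mem_filter, mem_univ, true_and] at hw ⊢
  by_cases hwv : w = v
  · exact absurd (hwv ▸ hw.symm) ((hdiff v).mpr rfl)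
  · exact (not_not.mp (mt (hdiff w).mp hwv)).trans hw

theorem colVillainy_le {G : SimpleGraph W} {c c' : W → ℕ} (hc' : IsProperColoring G c')
    (h : SameColorCounts c c') : colVillainy G c ≤ recolorCount c c' :=
  Nat.sInf_le ⟨c', hc', h, rfl⟩

theorem two_le_colVillainy {G : SimpleGraph W} {c : W → ℕ} (hc : ¬ IsProperColoring G c)
    (hfix : ∃ c', IsProperColoring G c' ∧ SameColorCounts c c') : 2 ≤ colVillainy G c := by
  obtain ⟨c₀, hc₀, hs₀⟩ := hfix
  obtain ⟨c', hc', hs', hn⟩ := Nat.sInf_mem (⟨_, c₀, hc₀, hs₀, rfl⟩ :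
    {n | ∃ c', IsProperColoring G c' ∧ SameColorCounts c c' ∧ recolorCount c c' = n}.Nonempty)
  rw [colVillainy, ← hn]
  by_contra! hlt
  interval_cases h : recolorCount c c'
  · exact hc (eq_of_recolorCount_eq_zero h ▸ hc')
  · exact not_sameColorCounts_of_recolorCount_eq_one h hs'

end Coloring

section CompleteSum

variable {α β : Type*} [Fintype α] [Fintype β]

theorem card_filter_le_two_of_isProperColoring {c : α ⊕ β → ℕ}
    (hc : IsProperColoring ((⊤ : SimpleGraph α) ⊕g (⊤ : SimpleGraph β)) c) (k : ℕ) :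
    (univ.filter fun v => c v = k).card ≤ 2 := by
  obtain ⟨hα, hβ⟩ := isProperColoring_sum_iff.mp hc
  rw [card_filter, Fintype.sum_sum_type, ← card_filter, ← card_filter]
  exact add_le_add (card_filter_le_one_of_injective (isProperColoring_top_iff.mp hα) k)
    (card_filter_le_one_of_injective (isProperColoring_top_iff.mp hβ) k)

theorem isProperColoring_of_injective_inl {c : α ⊕ β → ℕ}
    (hfib : ∀ k, (univ.filter fun v => c v = k).card ≤ 2)
    (himg : (univ.image c).card ≤ Fintype.card α) (hinj : Function.Injective (c ∘ Sum.inl)) :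
    IsProperColoring ((⊤ : SimpleGraph α) ⊕g (⊤ : SimpleGraph β)) c := by
  have himg_inl : univ.image (c ∘ Sum.inl) = univ.image c :=
    eq_of_subset_of_card_le (image_subset_iff.mpr fun a _ => mem_image_of_mem c (mem_univ _))
      (by rwa [card_image_of_injective _ hinj, card_univ])
  refine isProperColoring_sum_iff.mpr
    ⟨isProperColoring_top_iff.mpr hinj, fun b b' hbb' heq => ?_⟩
  -- every color already occurs on the complete part, so a monochromatic edge would make three
  obtain ⟨a, -, ha⟩ := mem_image.mp (himg_inl ▸ mem_image_of_mem c (mem_univ (Sum.inr b)))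
  exact ne_of_card_filter_le_two hfib Sum.inl_ne_inr Sum.inl_ne_inr
    (fun h => hbb' (Sum.inr_injective h)) ha (ha.trans heq)

theorem injective_comp_swap_inl [DecidableEq β] {c : Fin 3 ⊕ β → ℕ}
    (hfib : ∀ k, (univ.filter fun v => c v = k).card ≤ 2) {i j : Fin 3} (hij : i ≠ j)
    (hcij : c (.inl i) = c (.inl j)) {a : β} (ha : ∀ l, c (.inr a) ≠ c (.inl l)) :
    Function.Injective ((c ∘ Equiv.swap (.inl i) (.inr a)) ∘ Sum.inl) := by
  intro l l' hll'
  by_contra hne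
  have hval : ∀ l, ((c ∘ Equiv.swap (.inl i) (.inr a)) ∘ Sum.inl) l =
      if l = i then c (.inr a) else c (.inl l) := by
    intro l
    split_ifs with h
    · simp [h]
    · simp [Equiv.swap_apply_of_ne_of_ne, h]
  rw [hval, hval] at hll'
  split_ifs at hll' with hl hl' hl'
  · exact hne (hl.trans hl'.symm)
  · exact ha l' hll'
  · exact ha l hll'.symm
  -- one of `l`, `l'` is `j`, so together with `i` their common color occurs three times
  have hthird : ∀ i j l l' : Fin 3, i ≠ j → l ≠ i → l' ≠ i → l ≠ l' → l = j ∨ l' = j := by decide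
  rcases hthird i j l l' hij hl hl' hne with rfl | rfl
  · exact ne_of_card_filter_le_two hfib (by simpa using Ne.symm hl) (by simpa using Ne.symm hl')
      (by simpa using hne) hcij (hcij.trans hll')
  · exact ne_of_card_filter_le_two hfib (by simpa using Ne.symm hl') (by simpa using Ne.symm hl)
      (by simpa using Ne.symm hne) hcij (hcij.trans hll'.symm)

theorem exists_swap_isProperColoring [DecidableEq β] {c : Fin 3 ⊕ β → ℕ}
    (hfib : ∀ k, (univ.filter fun v => c v = k).card ≤ 2) (himg : (univ.image c).card = 3) :
    ∃ u v, IsProperColoring ((⊤ : SimpleGraph (Fin 3)) ⊕g (⊤ : SimpleGraph β))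
      (c ∘ Equiv.swap u v) := by
  suffices ∃ u v, Function.Injective ((c ∘ Equiv.swap u v) ∘ Sum.inl) by
    obtain ⟨u, v, hinj⟩ := this
    refine ⟨u, v, isProperColoring_of_injective_inl
      (fun k => (card_filter_comp_perm_eq c _ k).trans_le (hfib k)) ?_ hinj⟩
    rw [image_comp_perm, himg, Fintype.card_fin]
  by_cases hinj : Function.Injective (c ∘ Sum.inl)
  · exact ⟨.inl 0, .inl 0, by simpa using hinj⟩
  obtain ⟨i, j, hcij, hij⟩ : ∃ i j, c (.inl i) = c (.inl j) ∧ i ≠ j := by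
    simpa [Function.Injective] using hinj
  obtain ⟨z, hz, hz_inl⟩ := exists_mem_notMem_of_card_lt_card
    (s := univ.image (c ∘ Sum.inl)) (t := univ.image c) <| by
      rw [himg]
      refine card_image_le.lt_of_ne fun h => hinj ?_
      simpa using card_image_iff.mp h
  obtain ⟨_ | a, -, rfl⟩ := mem_image.mp hz
  · exact absurd (mem_image_of_mem _ (mem_univ _)) hz_inl
  exact ⟨.inl i, .inr a, injective_comp_swap_inl hfib hij hcij fun l h =>
    hz_inl (h ▸ mem_image_of_mem (c ∘ Sum.inl) (mem_univ l))⟩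

end CompleteSum

abbrev triangleAndEdge : SimpleGraph (Fin 3 ⊕ Fin 2) :=
  (⊤ : SimpleGraph (Fin 3)) ⊕g (⊤ : SimpleGraph (Fin 2))

theorem chromNum_triangleAndEdge : chromNum triangleAndEdge = 3 := by
  norm_num [chromNum, SimpleGraph.chromaticNumber_top]

theorem colVillainy_triangleAndEdge_le_two {f : Fin 3 ⊕ Fin 2 → ℕ}
    (hf : IsOptimalColoring triangleAndEdge f) (σ : Equiv.Perm (Fin 3 ⊕ Fin 2)) :
    colVillainy triangleAndEdge (f ∘ σ) ≤ 2 := by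
  obtain ⟨u, v, huv⟩ := exists_swap_isProperColoring (c := f ∘ σ)
    (fun k => (card_filter_comp_perm_eq f σ k).trans_le
      (card_filter_le_two_of_isProperColoring hf.1 k))
    (by rw [image_comp_perm, hf.2, chromNum_triangleAndEdge])
  exact (colVillainy_le huv (sameColorCounts_comp_perm _ _).symm).trans
    (recolorCount_comp_swap_le _ _ _)

def standardColoring : Fin 3 ⊕ Fin 2 → ℕ := Sum.elim Fin.val Fin.val

theorem isOptimalColoring_standardColoring :
    IsOptimalColoring triangleAndEdge standardColoring :=
  ⟨isProperColoring_sum_iff.mpr ⟨isProperColoring_top_iff.mpr Fin.val_injective,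
      isProperColoring_top_iff.mpr Fin.val_injective⟩,
    by rw [chromNum_triangleAndEdge]; decide⟩

-- the swap puts both vertices of color `0` into the triangle
theorem colVillainy_standardColoring_comp_swap :
    colVillainy triangleAndEdge (standardColoring ∘ Equiv.swap (.inl 2) (.inr 0)) = 2 :=
  le_antisymm (colVillainy_triangleAndEdge_le_two isOptimalColoring_standardColoring _) <|
    two_le_colVillainy (fun h => h (u := .inl 0) (v := .inl 2) (by simp) (by decide))
      ⟨standardColoring, isOptimalColoring_standardColoring.1, sameColorCounts_comp_perm _ _⟩

theorem villainy_K3_plus_K2 :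
    villainy ((⊤ : SimpleGraph (Fin 3)) ⊕g (⊤ : SimpleGraph (Fin 2))) = 2 := by
  refine IsGreatest.csSup_eq ⟨⟨standardColoring, _, isOptimalColoring_standardColoring, ⟨_, rfl⟩,
    colVillainy_standardColoring_comp_swap⟩, ?_⟩
  rintro n ⟨f, c, hf, ⟨σ, rfl⟩, rfl⟩
  exact colVillainy_triangleAndEdge_le_two hf σ
end
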